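/- arXiv:2509.02393 — 6 statements merged into one kernel-verified Lean document; each statement's English description precedes it below -/
import Mathlib

section
/- For any finite alphabet Σ, subset Σ₁ ⊆ Σ, and words x', x ∈ Σ*, if x' is a prefix of x then x' − Σ₁ is a prefix of x − Σ₁. Here x − Σ₁ denotes the word obtained from x by replacing every maximal nonempty factor of x consisting only of letters from Σ₁ by its first letter. -/
open scoped ENNReal

namespace PA

variable {α : Type*}

/-- Block contraction auxiliary: `prev` records whether the previous letter was in `K`
(i.e., we are inside a `K`-block whose first letter was already kept). -/
def contractAux [DecidableEq α] (K : Finset α) : Bool → List α → List α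
  | _, [] => []
  | prev, a :: x =>
    if a ∈ K then
      (if prev then contractAux K true x else a :: contractAux K true x)
    else a :: contractAux K false x

/-- `contract K x` is `x − K`: every maximal nonempty factor of `x` consisting of
letters of `K` is replaced by its first letter. -/
def contract [DecidableEq α] (K : Finset α) (x : List α) : List α :=
  contractAux K false x

/-- `preim K x` is `x + K`, the preimage of `x` under `contract K`. -/
def preim [DecidableEq α] (K : Finset α) (x : List α) : Set (List α) :=
  {x' | contract K x' = x}

/-- `minPref L` is `L^≤`: the prefix-minimal elements of `L`. -/
def minPref (L : Set (List α)) : Set (List α) :=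
  {x ∈ L | ∀ x', x' <+: x → x' ≠ x → x' ∉ L}

/-- Fusion concatenation: for `u` ending in `a` and `v` starting with `a`,
`fuse u v` is `u ++ v` with one copy of the shared letter removed. -/
def fuse (u v : List α) : List α := u ++ v.tail

/-- Elementwise fusion of sets of words. -/
def setFuse (X Y : Set (List α)) : Set (List α) :=
  {z | ∃ u ∈ X, ∃ v ∈ Y, z = fuse u v}

/-- Probability mass of a set of words: sum of `P` over the prefix-minimal elements. -/
noncomputable def setP (P : List α → ℝ≥0∞) (R : Set (List α)) : ℝ≥0∞ :=
  ∑' x : minPref R, P x.1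

/-- `P ∈ 𝒯(S)`: substochastic transition probability function on `S⁺`. -/
def IsTPF [Fintype α] (P : List α → ℝ≥0∞) : Prop :=
  (∀ x, P x ≤ 1) ∧ (∀ s : α, P [s] = 1) ∧
  (∀ s : α, (∑ t : α, P [s, t]) ≤ 1) ∧
  (∀ (x y : List α) (s : α), P (x ++ s :: y) = P (x ++ [s]) * P (s :: y))

/-- `(K)₀^M`: the interior of `K` in the DTMC `(P, a)`: states of `K` other than `a`
with no incoming transition from outside `K`. -/
def interior [Fintype α] [DecidableEq α] (P : List α → ℝ≥0∞) (a : α) (K : Finset α) :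
    Set α :=
  {s | s ∈ K ∧ s ≠ a ∧ (∑ t ∈ Kᶜ, P [t, s]) = 0}

open Classical in
noncomputable def abstr [Fintype α] [DecidableEq α]
    (P : List α → ℝ≥0∞) (a : α) (K : Finset α) : List α → ℝ≥0∞ :=
  fun x =>
    if x.length = 1 then 1
    else if 2 ≤ x.length ∧ ∃ s ∈ x, s ∈ interior P a K then 0
    else setP P (preim K x)

open Classical in
noncomputable def OutSet [Fintype α] (P : List α → ℝ≥0∞) (S₁ : Finset α) : Finset α :=
  Finset.univ.filter fun t => t ∉ S₁ ∧ 0 < ∑ s ∈ S₁, P [s, t]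

open Classical in
noncomputable def USet [Fintype α] (P : List α → ℝ≥0∞) (S₁ : Finset α) : Finset α :=
  Finset.univ.filter fun r => r ∈ S₁ ∧
    0 < setP P {x | ∃ (w : List α) (t : α),
      x = r :: (w ++ [t]) ∧ (∀ c ∈ w, c ∈ S₁) ∧ t ∈ OutSet P S₁}

open Classical in
noncomputable def U1Set [Fintype α] (P : List α → ℝ≥0∞) (S₁ : Finset α) : Finset α :=
  Finset.univ.filter fun r => r ∈ S₁ ∧ 0 < ∑ t ∈ OutSet P S₁, P [r, t]

end PA

namespace PA

variable {α : Type*} [DecidableEq α]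

theorem contractAux_prefix_mono (K : Finset α) (prev : Bool) {x' x : List α} (h : x' <+: x) :
    contractAux K prev x' <+: contractAux K prev x := by
  induction x' generalizing prev x with
  | nil => simp [contractAux]
  | cons a x' ih =>
    obtain ⟨r, rfl⟩ := h
    have hpre (b : Bool) : contractAux K b x' <+: contractAux K b (x' ++ r) := ih b ⟨r, rfl⟩
    simp only [List.cons_append, contractAux]
    split_ifs <;> simp [hpre]

end PA

theorem contract_prefix_mono_general {α : Type*} [DecidableEq α]
    (K : Finset α) (x' x : List α) (h : x' <+: x) :
    PA.contract K x' <+: PA.contract K x :=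
  PA.contractAux_prefix_mono K false h

/-- block contraction is monotone w.r.t. the prefix order. -/
theorem contract_prefix_mono {α : Type*} [DecidableEq α] [Fintype α]
    (K : Finset α) (x' x : List α) (h : x' <+: x) :
    PA.contract K x' <+: PA.contract K x :=
  contract_prefix_mono_general K x' x h
end

section
/- Let Σ be a finite alphabet, Σ₁ ⊆ Σ, x, y ∈ Σ*, and a ∈ Σ. If xa does not end in two consecutive letters from Σ₁ (i.e., xa ∉ Σ*Σ₁²), then (xay) − Σ₁ = ((xa) − Σ₁) ⋆ ((ay) − Σ₁), where u ⋆ v denotes fusion concatenation: for u ending in a and v starting with a, u ⋆ v is u concatenated with v with one copy of the shared letter a removed. -/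
open scoped ENNReal

namespace PA

variable {α : Type*} [DecidableEq α] (K : Finset α)

/-- `contractAux` is a two-state transducer; its state after reading `x` is whether the last
letter read lies in `K`. -/
theorem contractAux_append (prev : Bool) (x y : List α) :
    contractAux K prev (x ++ y) =
      contractAux K prev x ++ contractAux K (x.foldl (fun _ c => decide (c ∈ K)) prev) y := by
  induction x generalizing prev with
  | nil => rfl
  | cons b x ih => by_cases hb : b ∈ K <;> cases prev <;> simp [contractAux, hb, ih]

theorem contract_cons (a : α) (y : List α) :
    contract K (a :: y) = a :: contractAux K (decide (a ∈ K)) y := by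
  by_cases ha : a ∈ K <;> simp [contract, contractAux, ha]

theorem contract_append_singleton_append (x y : List α) (a : α) :
    contract K (x ++ [a] ++ y) = contract K (x ++ [a]) ++ contractAux K (decide (a ∈ K)) y := by
  simp only [contract, contractAux_append, List.foldl_append, List.foldl_cons, List.foldl_nil]

end PA

theorem contract_fuse_general {α : Type*} [DecidableEq α]
    (K : Finset α) (x y : List α) (a : α) :
    PA.contract K (x ++ [a] ++ y) =
      PA.fuse (PA.contract K (x ++ [a])) (PA.contract K (a :: y)) := by
  rw [PA.contract_append_singleton_append, PA.fuse, PA.contract_cons, List.tail_cons]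

/-- contraction distributes over fusion at a cut point not inside a `K²` suffix. -/
theorem contract_fuse {α : Type*} [DecidableEq α] [Fintype α]
    (K : Finset α) (x y : List α) (a : α)
    (h : ¬ ∃ (z : List α) (b c : α), x ++ [a] = z ++ [b, c] ∧ b ∈ K ∧ c ∈ K) :
    PA.contract K (x ++ [a] ++ y) =
      PA.fuse (PA.contract K (x ++ [a])) (PA.contract K (a :: y)) :=
  contract_fuse_general K x y a
end

section
/- Let Σ be a finite alphabet and Σ₁ ⊆ Σ₂ ⊆ Σ. Then for all words x ∈ Σ*, applying −Σ₁ followed by −Σ₂ equals applying −Σ₂ directly: (x − Σ₁) − Σ₂ = x − Σ₂. -/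
open scoped ENNReal

namespace PA

variable {α : Type*} [DecidableEq α]

/- The flag of the inner `contractAux` may only be set when the outer one is: a `K₁`-block lies
inside a `K₂`-block, so every letter `−K₁` drops would be dropped by `−K₂` anyway. -/
theorem contractAux_contractAux_of_subset {K₁ K₂ : Finset α} (h : K₁ ⊆ K₂) (x : List α)
    {b₁ b₂ : Bool} (hb : b₁ = true → b₂ = true) :
    contractAux K₂ b₂ (contractAux K₁ b₁ x) = contractAux K₂ b₂ x := by
  induction x generalizing b₁ b₂ with
  | nil => rfl
  | cons a x ih =>
    by_cases h₁ : a ∈ K₁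
    · have h₂ := h h₁
      cases b₁ <;> cases b₂ <;> simp_all [contractAux]
    · by_cases h₂ : a ∈ K₂ <;> cases b₂ <;> simp_all [contractAux]

end PA

theorem contract_contract_general {α : Type*} [DecidableEq α]
    (K₁ K₂ : Finset α) (h : K₁ ⊆ K₂) (x : List α) :
    PA.contract K₂ (PA.contract K₁ x) = PA.contract K₂ x :=
  PA.contractAux_contractAux_of_subset h x fun hb => hb

/-- for `K₁ ⊆ K₂`, `(x − K₁) − K₂ = x − K₂`. -/
theorem contract_contract {α : Type*} [DecidableEq α] [Fintype α]
    (K₁ K₂ : Finset α) (h : K₁ ⊆ K₂) (x : List α) :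
    PA.contract K₂ (PA.contract K₁ x) = PA.contract K₂ x :=
  contract_contract_general K₁ K₂ h x
end

section
/- Let S be a finite set, P ∈ 𝒯(S) a substochastic transition probability function, s ∈ S, and R ⊂ sS* a finite set of words all starting with s. Then P(R) := Σ_{x ∈ R^≤} P(x) ≤ 1. -/
/-! A prefix-free set of words continuing `s` splits by its next letter `t`. By multiplicativity
of `P`, the part through `t` has mass `P(st)` times the mass of a prefix-free set of strictly
shorter words continuing `t`, so induction on the maximal length bounds the total by
`Σ_t P(st) ≤ 1`. -/

open scoped ENNReal

namespace PA

variable {α : Type*}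

def IsPrefixFree (L : Set (List α)) : Prop :=
  ∀ ⦃x⦄, x ∈ L → ∀ ⦃y⦄, y ∈ L → x <+: y → x = y

theorem isPrefixFree_minPref (L : Set (List α)) : IsPrefixFree (minPref L) := by
  intro x hx y hy hxy
  by_contra hne
  exact hy.2 x hxy hne hx.1

theorem IsPrefixFree.preimage_cons {L : Set (List α)} (hL : IsPrefixFree L) (t : α) :
    IsPrefixFree ((t :: ·) ⁻¹' L) := fun _ hx _ hy hxy =>
  List.cons_injective (hL hx hy (List.cons_prefix_cons.mpr ⟨rfl, hxy⟩))

theorem IsPrefixFree.eq_singleton_nil {G : Finset (List α)} (hG : IsPrefixFree (G : Set (List α)))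
    (hnil : [] ∈ G) : G = {[]} :=
  Finset.eq_singleton_iff_unique_mem.mpr ⟨hnil, fun y hy => (hG hnil hy y.nil_prefix).symm⟩

theorem setP_eq_sum_of_finite (P : List α → ℝ≥0∞) {R : Set (List α)}
    (h : (minPref R).Finite) : setP P R = ∑ x ∈ h.toFinset, P x := by
  rw [setP, ← Finset.tsum_subtype', h.coe_toFinset]

theorem sum_eq_sum_sum_preimage_cons {M : Type*} [AddCommMonoid M] [Fintype α]
    (G : Finset (List α)) (hnil : [] ∉ G) (f : List α → M) :
    ∑ y ∈ G, f y =
      ∑ t : α, ∑ y ∈ G.preimage (t :: ·) List.cons_injective.injOn, f (t :: y) := by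
  rw [Finset.sum_sigma']
  refine (Finset.sum_bij (fun p _ => p.1 :: p.2) ?_ ?_ ?_ ?_).symm
  · intro p hp
    simpa using hp
  · rintro ⟨t, y⟩ - ⟨t', y'⟩ - h
    obtain ⟨rfl, rfl⟩ := List.cons_eq_cons.mp h
    rfl
  · rintro (_ | ⟨t, y⟩) hy
    · exact absurd hy hnil
    · exact ⟨⟨t, y⟩, by simpa using hy, rfl⟩
  · intro p _
    rfl

variable [Fintype α] {P : List α → ℝ≥0∞}

theorem IsTPF.apply_cons_cons (hP : IsTPF P) (s t : α) (y : List α) :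
    P (s :: t :: y) = P [s, t] * P (t :: y) :=
  hP.2.2.2 [s] y t

theorem IsTPF.sum_cons_le_one_of_length_lt (hP : IsTPF P) (n : ℕ) (s : α)
    {G : Finset (List α)} (hG : IsPrefixFree (G : Set (List α)))
    (hlen : ∀ y ∈ G, y.length < n) : ∑ y ∈ G, P (s :: y) ≤ 1 := by
  induction n generalizing s G with
  | zero =>
    rw [Finset.eq_empty_of_forall_notMem fun y hy => Nat.not_lt_zero _ (hlen y hy)]
    simp
  | succ n ih =>
    by_cases hnil : [] ∈ G
    · simp [hG.eq_singleton_nil hnil, hP.2.1 s]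
    have hfiber (t : α) :
        ∑ y ∈ G.preimage (t :: ·) List.cons_injective.injOn, P (s :: t :: y) ≤ P [s, t] := by
      rw [Finset.sum_congr rfl fun y _ => hP.apply_cons_cons s t y, ← Finset.mul_sum]
      refine mul_le_of_le_one_right zero_le (ih t ?_ fun y hy => ?_)
      · simpa using hG.preimage_cons t
      · exact Nat.succ_lt_succ_iff.mp (hlen _ (Finset.mem_preimage.mp hy))
    calc ∑ y ∈ G, P (s :: y)
        = ∑ t : α, ∑ y ∈ G.preimage (t :: ·) List.cons_injective.injOn, P (s :: t :: y) :=
          sum_eq_sum_sum_preimage_cons G hnil _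
      _ ≤ ∑ t : α, P [s, t] := Finset.sum_le_sum fun t _ => hfiber t
      _ ≤ 1 := hP.2.2.1 s

theorem IsTPF.sum_cons_le_one (hP : IsTPF P) (s : α) {G : Finset (List α)}
    (hG : IsPrefixFree (G : Set (List α))) : ∑ y ∈ G, P (s :: y) ≤ 1 :=
  hP.sum_cons_le_one_of_length_lt (G.sup List.length + 1) s hG fun _ hy =>
    Nat.lt_succ_of_le (Finset.le_sup hy)

end PA

open scoped ENNReal in
/-- for a finite set `R` of words all starting with `s`, `P(R) ≤ 1`. -/
theorem setP_le_one_of_finite {α : Type*} [Fintype α]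
    (P : List α → ℝ≥0∞) (hP : PA.IsTPF P) (s : α)
    (R : Set (List α)) (hfin : R.Finite) (hR : ∀ x ∈ R, ∃ y : List α, x = s :: y) :
    PA.setP P R ≤ 1 := by
  have hM : (PA.minPref R).Finite := hfin.subset fun _ hx => hx.1
  have hcons : ∀ x ∈ hM.toFinset, x ∉ Set.range (s :: ·) → P x = 0 := by
    intro x hx hrange
    obtain ⟨y, rfl⟩ := hR x (hM.mem_toFinset.mp hx).1
    exact absurd ⟨y, rfl⟩ hrange
  rw [PA.setP_eq_sum_of_finite P hM,
    ← Finset.sum_preimage _ _ List.cons_injective.injOn _ hcons]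
  refine hP.sum_cons_le_one s ?_
  simpa using (PA.isPrefixFree_minPref R).preimage_cons s
end

section
/- Let S be a finite set and P ∈ 𝒯(S) a substochastic transition probability function. If R ⊆ T ⊆ S⁺, then P(R) ≤ P(T), where P(L) := Σ_{x ∈ L^≤} P(x). (Note that R^≤ ⊆ T^≤ does not hold in general; monotonicity must be proved via mapping each element of R^≤ to its unique nonempty prefix in T^≤.) -/
open scoped ENNReal

/-!
Every word of `R^≤` lies in `T` and so has a prefix in `T^≤`; grouping the words of `R^≤`
by such a prefix `y`, each group is a prefix antichain of extensions of the nonempty word `y`.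
Splitting an antichain of extensions of `y` according to the letter that follows `y`, the
multiplicativity `P(y t) = P(y) P(s t)` (with `s` the last letter of `y`) and
`Σ_t P(s t) ≤ 1` show by induction on the lengths that its mass is at most `P(y)`.
-/

namespace PA

variable {α : Type*}

theorem not_prefix_of_mem_minPref {L : Set (List α)} {x y : List α} (hx : x ∈ minPref L)
    (hy : y ∈ minPref L) (hxy : x ≠ y) : ¬ x <+: y :=
  fun h => hy.2 x h hxy hx.1

theorem exists_mem_minPref_prefix {L : Set (List α)} {x : List α} (hx : x ∈ L) :
    ∃ y ∈ minPref L, y <+: x := by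
  by_cases h : ∃ x', x' <+: x ∧ x' ≠ x ∧ x' ∈ L
  · obtain ⟨x', hx'x, hne, hx'⟩ := h
    have : x'.length < x.length := lt_of_not_ge fun hle => hne (hx'x.eq_of_length_le hle)
    obtain ⟨y, hy, hyx'⟩ := exists_mem_minPref_prefix hx'
    exact ⟨y, hy, hyx'.trans hx'x⟩
  · push Not at h
    exact ⟨x, ⟨hx, fun x' hx'x hne => h x' hx'x hne⟩, List.prefix_refl x⟩
termination_by x.length

theorem concat_getD_prefix {x y : List α} (h : y <+: x) (hne : x ≠ y) (a : α) :
    y ++ [x.getD y.length a] <+: x := by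
  have hl : y.length < x.length := lt_of_not_ge fun hle => hne (h.eq_of_length_le hle).symm
  rw [List.getD_eq_getElem?_getD, List.getElem?_eq_getElem hl]
  exact List.concat_get_prefix h hl

theorem sum_prefix_antichain_eq_of_apply_eq {ι : Type*} {f : ι → List α}
    (hf : Pairwise fun i j => ¬ f i <+: f j) {y : List α} {s : Finset ι}
    (hs : ∀ i ∈ s, y <+: f i) {i : ι} (hi : i ∈ s) (hiy : f i = y) (g : List α → ℝ≥0∞) :
    ∑ j ∈ s, g (f j) = g y :=
  hiy ▸ Finset.sum_eq_single_of_mem i hi fun j hj hji => absurd (hiy ▸ hs j hj) (hf hji.symm)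

section IsTPF

variable [Fintype α] {P : List α → ℝ≥0∞}

theorem IsTPF.sum_append_singleton_le (hP : IsTPF P) {y : List α} (hy : y ≠ []) :
    ∑ t, P (y ++ [t]) ≤ P y := by
  obtain ⟨y', s, rfl⟩ : ∃ y' s, y = y' ++ [s] := ⟨_, _, (List.dropLast_append_getLast hy).symm⟩
  calc ∑ t, P (y' ++ [s] ++ [t]) = P (y' ++ [s]) * ∑ t, P [s, t] := by
        rw [Finset.mul_sum]
        exact Finset.sum_congr rfl fun t _ => by simpa using hP.2.2.2 y' [t] s
    _ ≤ P (y' ++ [s]) := mul_le_of_le_one_right' (hP.2.2.1 s)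

theorem IsTPF.sum_le_of_prefix_antichain_of_length_le (hP : IsTPF P) {ι : Type*}
    {f : ι → List α} (hf : Pairwise fun i j => ¬ f i <+: f j) (n : ℕ) :
    ∀ {y : List α}, y ≠ [] → ∀ {s : Finset ι},
      (∀ i ∈ s, y <+: f i ∧ (f i).length ≤ y.length + n) → ∑ i ∈ s, P (f i) ≤ P y := by
  induction n with
  | zero =>
    intro y _ s hs
    obtain rfl | ⟨i, hi⟩ := s.eq_empty_or_nonempty
    · simp
    have hiy : f i = y := ((hs i hi).1.eq_of_length_le (by simpa using (hs i hi).2)).symm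
    exact (sum_prefix_antichain_eq_of_apply_eq hf (fun j hj => (hs j hj).1) hi hiy P).le
  | succ n ih =>
    classical
    intro y hy s hs
    by_cases hit : ∃ i ∈ s, f i = y
    · obtain ⟨i, hi, hiy⟩ := hit
      exact (sum_prefix_antichain_eq_of_apply_eq hf (fun j hj => (hs j hj).1) hi hiy P).le
    push Not at hit
    -- the default letter is never read, since every `f i` strictly extends `y`
    let next (i : ι) : α := (f i).getD y.length (y.head hy)
    calc ∑ i ∈ s, P (f i) = ∑ t, ∑ i ∈ s with next i = t, P (f i) :=
          (Finset.sum_fiberwise s next _).symm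
      _ ≤ ∑ t, P (y ++ [t]) := by
          refine Finset.sum_le_sum fun t _ => ih (by simp) fun i hi => ?_
          obtain ⟨his, rfl⟩ := Finset.mem_filter.mp hi
          refine ⟨concat_getD_prefix (hs i his).1 (hit i his) _, ?_⟩
          rw [List.length_append, List.length_singleton, Nat.add_right_comm]
          exact (hs i his).2
      _ ≤ P y := hP.sum_append_singleton_le hy

theorem IsTPF.tsum_le_of_prefix_antichain (hP : IsTPF P) {ι : Type*} {f : ι → List α}
    (hf : Pairwise fun i j => ¬ f i <+: f j) {y : List α} (hy : y ≠ []) (hpre : ∀ i, y <+: f i) :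
    ∑' i, P (f i) ≤ P y :=
  ENNReal.summable.tsum_le_of_sum_le fun s =>
    hP.sum_le_of_prefix_antichain_of_length_le hf (s.sup fun i => (f i).length) hy fun i hi =>
      ⟨hpre i, (Finset.le_sup (f := fun i => (f i).length) hi).trans (Nat.le_add_left _ _)⟩

end IsTPF

end PA

open scoped ENNReal in
/-- monotonicity of `setP`: `R ⊆ T ⊆ S⁺` implies `P(R) ≤ P(T)`. -/
theorem setP_mono {α : Type*} [Fintype α]
    (P : List α → ℝ≥0∞) (hP : PA.IsTPF P)
    (R T : Set (List α)) (hRT : R ⊆ T) (hT : ∀ x ∈ T, x ≠ []) :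
    PA.setP P R ≤ PA.setP P T := by
  choose g hgT hg using fun x : PA.minPref R => PA.exists_mem_minPref_prefix (hRT x.2.1)
  let root (x : PA.minPref R) : PA.minPref T := ⟨g x, hgT x⟩
  calc PA.setP P R = ∑' y, ∑' x : root ⁻¹' {y}, P x.1.1 := (ENNReal.tsum_fiberwise _ root).symm
    _ ≤ ∑' y : PA.minPref T, P y := by
        refine ENNReal.tsum_le_tsum fun y => hP.tsum_le_of_prefix_antichain ?_ (hT y y.2.1) ?_
        · exact fun x x' hne => PA.not_prefix_of_mem_minPref x.1.2 x'.1.2 fun h =>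
            hne (Subtype.ext (Subtype.ext h))
        · rintro ⟨x, hx⟩
          exact (congrArg Subtype.val hx : g x = y) ▸ hg x
end

section
/- Let M = (P, a) be a substochastic DTMC on finite S, S₁ ⊊ S. With ℐ := S₁∖(S₁)₀^M, 𝒪 := {t ∈ S∖S₁ | P(S₁t) > 0}, 𝒰 := {r ∈ S₁ | P(rS₁*𝒪) > 0}, 𝒰₁ := {r ∈ S₁ | P(r𝒪) > 0}, suppose ℐ∩𝒰 and 𝒪 are nonempty, and let s ∈ ℐ∩𝒰, t ∈ 𝒪. Let Q ∈ ℝ^{𝒰×𝒰₁} be the unique solution of (1 − P₂(𝒰))·Q = 1(𝒰,𝒰₁). Then the abstracted transition probability satisfies P_{S₁}^a(st) = P(sS₁*t) = Q(s,𝒰₁)·P₂(𝒰₁,t), i.e., the local reachability probability from s to t through S₁ is obtained by solving the linear system. -/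
open scoped ENNReal

/-!
Every word `s w t` with `w ∈ S₁*` contracts to `st`, and these words form a prefix-free set,
so `P_{S₁}^a(st)` is the series `F(s) = ∑_w P(s w t)`. Splitting off the first letter gives
`F = P₂(·, t) + P₂(𝒰) F` on `𝒰` (`F` vanishes on `S₁ ∖ 𝒰`), and its truncations by word length
are bounded by `1`, so `F` is a real solution of `(1 - P₂(𝒰)) F = P₂(𝒰, t)`. The vector
`Q P₂(𝒰₁, t)` solves the same system because `P(rt) = 0` for `r ∉ 𝒰₁`. Finally `1 - P₂(𝒰)` is
injective: from every state of `𝒰` a path of positive transitions reaches a state whose row sum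
in `P₂(𝒰)` is `< 1`, and a solution of `x = P₂(𝒰) x` keeps its maximal modulus along such paths,
so that maximum is `0`.
-/

namespace Matrix

variable {ι : Type*} [Fintype ι] {A : Matrix ι ι ℝ}

theorem eq_zero_of_mulVec_eq_self (h0 : ∀ i j, 0 ≤ A i j) (h1 : ∀ i, ∑ j, A i j ≤ 1)
    (hleak : ∀ i, ∃ l, Relation.ReflTransGen (fun i j => 0 < A i j) i l ∧ ∑ j, A l j < 1)
    {x : ι → ℝ} (hx : A *ᵥ x = x) : x = 0 := by
  by_contra hne
  obtain ⟨j₀, hj₀⟩ := Function.ne_iff.1 hne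
  obtain ⟨i₀, -, hmax⟩ := Finset.exists_max_image Finset.univ (|x ·|) ⟨j₀, Finset.mem_univ _⟩
  set m := |x i₀|
  replace hmax (j : ι) : |x j| ≤ m := hmax j (Finset.mem_univ j)
  have hm : 0 < m := (abs_pos.2 hj₀).trans_le (hmax j₀)
  have habs (i : ι) : |x i| ≤ ∑ j, A i j * |x j| := by
    conv_lhs => rw [← hx]
    refine (Finset.abs_sum_le_sum_abs _ _).trans_eq (Finset.sum_congr rfl fun j _ => ?_)
    rw [abs_mul, abs_of_nonneg (h0 i j)]
  have hbound (i : ι) : ∑ j, A i j * |x j| ≤ (∑ j, A i j) * m := by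
    rw [Finset.sum_mul]
    exact Finset.sum_le_sum fun j _ => mul_le_mul_of_nonneg_left (hmax j) (h0 i j)
  have hstep {i j : ι} (hi : |x i| = m) (hij : 0 < A i j) : |x j| = m := by
    by_contra hj
    have hlt : ∑ k, A i k * |x k| < ∑ k, A i k * m :=
      Finset.sum_lt_sum (fun k _ => mul_le_mul_of_nonneg_left (hmax k) (h0 i k))
        ⟨j, Finset.mem_univ _, mul_lt_mul_of_pos_left
          ((hmax j).lt_of_ne hj) hij⟩
    rw [← Finset.sum_mul] at hlt
    nlinarith [habs i, h1 i]
  have hreach {l : ι} (hpath : Relation.ReflTransGen (fun i j => 0 < A i j) i₀ l) :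
      |x l| = m := by
    induction hpath with
    | refl => rfl
    | tail _ hjk ih => exact hstep ih hjk
  obtain ⟨l, hpath, hl⟩ := hleak i₀
  nlinarith [habs l, hbound l, hreach hpath]

theorem injective_one_sub_mulVec [DecidableEq ι] (h0 : ∀ i j, 0 ≤ A i j)
    (h1 : ∀ i, ∑ j, A i j ≤ 1)
    (hleak : ∀ i, ∃ l, Relation.ReflTransGen (fun i j => 0 < A i j) i l ∧ ∑ j, A l j < 1) :
    Function.Injective ((1 - A) *ᵥ ·) := by
  intro x y h
  rw [← sub_eq_zero]
  refine eq_zero_of_mulVec_eq_self h0 h1 hleak ?_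
  rwa [← sub_eq_zero, ← mulVec_sub, sub_mulVec, one_mulVec, sub_eq_zero, eq_comm] at h

end Matrix

namespace PA

open scoped Matrix

variable {α : Type*}

section Contract

variable {K : Finset α}

lemma append_singleton_eq_of_prefix {t t₁ : α} (ht₁ : t₁ ∉ K) :
    ∀ {w w₁ : List α}, (∀ c ∈ w, c ∈ K) → w₁ ++ [t₁] <+: w ++ [t] → w₁ ++ [t₁] = w ++ [t]
  | [], [], _, h => by simpa using h.eq_of_length rfl
  | c :: w, [], hw, h => by
    obtain ⟨rfl, -⟩ := List.cons_prefix_cons.mp h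
    exact absurd (hw _ List.mem_cons_self) ht₁
  | [], d :: w₁, _, h => by simpa using h.length_le
  | c :: w, d :: w₁, hw, h => by
    obtain ⟨rfl, htail⟩ := List.cons_prefix_cons.mp h
    rw [List.cons_append, List.cons_append,
      append_singleton_eq_of_prefix ht₁ (fun e he => hw e (.tail _ he)) htail]

lemma minPref_eq_self {L : Set (List α)} (h : ∀ x ∈ L, ∀ y ∈ L, x <+: y → x = y) :
    minPref L = L :=
  Set.ext fun _ => ⟨And.left, fun hx => ⟨hx, fun _ hyx hne hy => hne (h _ hy _ hx hyx)⟩⟩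

variable [DecidableEq α]

lemma contractAux_false_eq_nil_iff {x : List α} : contractAux K false x = [] ↔ x = [] := by
  cases x with
  | nil => simp [contractAux]
  | cons c y => by_cases hc : c ∈ K <;> simp [contractAux, hc]

lemma contractAux_true_eq_singleton_iff {t : α} (ht : t ∉ K) {x : List α} :
    contractAux K true x = [t] ↔ ∃ w, x = w ++ [t] ∧ ∀ c ∈ w, c ∈ K := by
  induction x with
  | nil => simp [contractAux]
  | cons c y ih =>
    by_cases hc : c ∈ K
    · rw [contractAux, if_pos hc, if_pos rfl, ih]
      constructor
      · rintro ⟨w, rfl, hw⟩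
        exact ⟨c :: w, rfl, by simpa [hc] using hw⟩
      · rintro ⟨_ | ⟨d, w⟩, h, hw⟩
        · simp only [List.nil_append, List.cons.injEq] at h
          exact absurd (h.1 ▸ hc) ht
        · simp only [List.cons_append, List.cons.injEq] at h
          exact ⟨w, h.2, fun e he => hw e (.tail _ he)⟩
    · simp only [contractAux, if_neg hc, List.cons.injEq, contractAux_false_eq_nil_iff]
      constructor
      · rintro ⟨rfl, rfl⟩
        exact ⟨[], rfl, by simp⟩
      · rintro ⟨_ | ⟨d, w⟩, h, hw⟩
        · simpa using h
        · simp only [List.cons_append, List.cons.injEq] at h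
          exact absurd (h.1 ▸ hw d List.mem_cons_self) hc

lemma contract_eq_pair_iff {r t : α} (hr : r ∈ K) (ht : t ∉ K) {x : List α} :
    contract K x = [r, t] ↔ ∃ w, x = r :: (w ++ [t]) ∧ ∀ c ∈ w, c ∈ K := by
  cases x with
  | nil => simp [contract, contractAux]
  | cons c y =>
    by_cases hc : c ∈ K
    · simp [contract, contractAux, hc, contractAux_true_eq_singleton_iff ht, and_assoc]
    · have hcr : c ≠ r := fun h => hc (h ▸ hr)
      simp [contract, contractAux, hc, hcr]

lemma preim_pair {r t : α} (hr : r ∈ K) (ht : t ∉ K) :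
    preim K [r, t] = {x | ∃ w, x = r :: (w ++ [t]) ∧ ∀ c ∈ w, c ∈ K} :=
  Set.ext fun _ => contract_eq_pair_iff hr ht

end Contract

abbrev Words (K : Finset α) : Type _ := {w : List α // ∀ c ∈ w, c ∈ K}

def consEquiv (K : Finset α) : Unit ⊕ (K × Words K) ≃ Words K where
  toFun := Sum.elim (fun _ => ⟨[], by simp⟩)
    (fun p => ⟨p.1.1 :: p.2.1, List.forall_mem_cons.2 ⟨p.1.2, p.2.2⟩⟩)
  invFun
    | ⟨[], _⟩ => .inl ()
    | ⟨c :: w, h⟩ => .inr (⟨c, h c List.mem_cons_self⟩, ⟨w, fun e he => h e (.tail _ he)⟩)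
  left_inv := by rintro (⟨⟩ | ⟨⟨c, hc⟩, ⟨w, hw⟩⟩) <;> rfl
  right_inv := by rintro ⟨_ | ⟨c, w⟩, h⟩ <;> rfl

lemma tsum_words {K : Finset α} (g : List α → ℝ≥0∞) :
    ∑' w : Words K, g w = g [] + ∑' c : K, ∑' w : Words K, g (c :: w) := by
  rw [← (consEquiv K).tsum_eq, ENNReal.summable.tsum_sum ENNReal.summable, tsum_fintype,
    Fintype.sum_unique]
  exact congrArg _ (ENNReal.tsum_prod (f := fun (c : K) (w : Words K) => g (c.1 :: w.1)))

-- `reach P K r t` is `P(r K* t)` in the paper's notation.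
noncomputable def reach (P : List α → ℝ≥0∞) (K : Finset α) (r t : α) : ℝ≥0∞ :=
  ∑' w : Words K, P (r :: (w.1 ++ [t]))

noncomputable def reachLE (P : List α → ℝ≥0∞) (K : Finset α) (n : ℕ) (r t : α) : ℝ≥0∞ :=
  ∑' w : Words K, if w.1.length ≤ n then P (r :: (w.1 ++ [t])) else 0

variable {P : List α → ℝ≥0∞} {K : Finset α}

lemma setP_eq_reach {r t : α} (ht : t ∉ K) :
    setP P {x | ∃ w, x = r :: (w ++ [t]) ∧ ∀ c ∈ w, c ∈ K} = reach P K r t := by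
  have hrange : {x | ∃ w, x = r :: (w ++ [t]) ∧ ∀ c ∈ w, c ∈ K}
      = Set.range fun w : Words K => r :: (w.1 ++ [t]) := by
    ext x
    simp [eq_comm, and_comm]
  have hinj : Function.Injective fun w : Words K => r :: (w.1 ++ [t]) :=
    fun w w' h => Subtype.ext (by simpa using h)
  rw [setP, minPref_eq_self, hrange, tsum_range (fun x => P x) hinj, reach]
  rintro _ ⟨w₁, rfl, -⟩ _ ⟨w, rfl, hw⟩ h
  rw [append_singleton_eq_of_prefix ht hw (List.cons_prefix_cons.mp h).2]

lemma reachLE_zero (r t : α) : reachLE P K 0 r t = P [r, t] := by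
  rw [reachLE, tsum_words fun l => if l.length ≤ 0 then P (r :: (l ++ [t])) else 0]
  simp

section Chain

variable [Fintype α]

lemma IsTPF.cons (hP : IsTPF P) (u c : α) (l : List α) :
    P (u :: c :: l) = P [u, c] * P (c :: l) := by
  simpa using hP.2.2.2 [u] l c

lemma IsTPF.ne_top (hP : IsTPF P) (x : List α) : P x ≠ ⊤ :=
  ne_top_of_le_ne_top ENNReal.one_ne_top (hP.1 x)

lemma IsTPF.sum_le_one (hP : IsTPF P) (u : α) (S : Finset α) : ∑ v ∈ S, P [u, v] ≤ 1 :=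
  (Finset.sum_le_sum_of_subset (Finset.subset_univ S)).trans (hP.2.2.1 u)

lemma reach_eq (hP : IsTPF P) (r t : α) :
    reach P K r t = P [r, t] + ∑ c ∈ K, P [r, c] * reach P K c t := by
  rw [reach, tsum_words fun l => P (r :: (l ++ [t])), ← Finset.tsum_subtype]
  congr 1
  refine tsum_congr fun c => ?_
  rw [reach, ← ENNReal.tsum_mul_left]
  exact tsum_congr fun w => hP.cons r c _

lemma reachLE_succ (hP : IsTPF P) (n : ℕ) (r t : α) :
    reachLE P K (n + 1) r t = P [r, t] + ∑ c ∈ K, P [r, c] * reachLE P K n c t := by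
  rw [reachLE, tsum_words fun l => if l.length ≤ n + 1 then P (r :: (l ++ [t])) else 0,
    ← Finset.tsum_subtype]
  simp only [List.length_nil, zero_le, if_true, List.nil_append, List.length_cons,
    Nat.add_le_add_iff_right]
  congr 1
  refine tsum_congr fun c => ?_
  rw [reachLE, ← ENNReal.tsum_mul_left]
  refine tsum_congr fun w => ?_
  rw [List.cons_append, hP.cons, mul_ite, mul_zero]

lemma reachLE_le_one (hP : IsTPF P) {t : α} (ht : t ∉ K) (n : ℕ) (r : α) :
    reachLE P K n r t ≤ 1 := by
  classical
  induction n generalizing r with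
  | zero => exact reachLE_zero (K := K) r t ▸ hP.1 _
  | succ n ih =>
    calc reachLE P K (n + 1) r t
        ≤ P [r, t] + ∑ c ∈ K, P [r, c] * 1 := by
          rw [reachLE_succ hP]
          gcongr with c
          exact ih c
      _ = ∑ v ∈ insert t K, P [r, v] := by simp [Finset.sum_insert ht]
      _ ≤ 1 := hP.sum_le_one r _

lemma reach_le_one (hP : IsTPF P) {t : α} (ht : t ∉ K) (r : α) : reach P K r t ≤ 1 := by
  rw [reach, ENNReal.tsum_eq_iSup_sum]
  refine iSup_le fun F => ?_
  let n := F.sup fun w => w.1.length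
  calc ∑ w ∈ F, P (r :: (w.1 ++ [t]))
      = ∑ w ∈ F, if w.1.length ≤ n then P (r :: (w.1 ++ [t])) else 0 :=
        Finset.sum_congr rfl fun w hw => by
          rw [if_pos (Finset.le_sup (f := fun w : Words K => w.1.length) hw)]
    _ ≤ reachLE P K n r t := ENNReal.sum_le_tsum F
    _ ≤ 1 := reachLE_le_one hP ht n r

lemma reach_ne_top (hP : IsTPF P) {t : α} (ht : t ∉ K) (r : α) : reach P K r t ≠ ⊤ :=
  ne_top_of_le_ne_top ENNReal.one_ne_top (reach_le_one hP ht r)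

variable [DecidableEq α]

lemma abstr_pair {a s t : α} (hs : s ∉ interior P a K) (ht : t ∉ K) :
    abstr P a K [s, t] = setP P (preim K [s, t]) := by
  rw [abstr, if_neg (by simp), if_neg]
  rintro ⟨-, c, hc, hcI⟩
  rcases List.mem_pair.mp hc with rfl | rfl
  exacts [hs hcI, ht hcI.1]

end Chain

section Escape

variable [Fintype α]

lemma mem_OutSet {t : α} : t ∈ OutSet P K ↔ t ∉ K ∧ 0 < ∑ s ∈ K, P [s, t] := by
  simp [OutSet]

lemma mem_U1Set {r : α} : r ∈ U1Set P K ↔ r ∈ K ∧ 0 < ∑ t ∈ OutSet P K, P [r, t] := by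
  simp [U1Set]

lemma mem_USet {r : α} : r ∈ USet P K ↔ r ∈ K ∧ 0 < setP P {x | ∃ (w : List α) (t : α),
      x = r :: (w ++ [t]) ∧ (∀ c ∈ w, c ∈ K) ∧ t ∈ OutSet P K} := by
  simp [USet]

lemma mem_USet_of_pos {c t : α} {w : List α} (hc : c ∈ K) (hw : ∀ d ∈ w, d ∈ K)
    (ht : t ∈ OutSet P K) (hpos : 0 < P (c :: (w ++ [t]))) : c ∈ USet P K := by
  refine mem_USet.2 ⟨hc, hpos.trans_le ?_⟩
  rw [setP, minPref_eq_self]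
  · exact ENNReal.le_tsum (⟨_, w, t, rfl, hw, ht⟩ : {x | ∃ (w : List α) (t : α),
      x = c :: (w ++ [t]) ∧ (∀ c ∈ w, c ∈ K) ∧ t ∈ OutSet P K})
  rintro _ ⟨w₁, t₁, rfl, -, ht₁⟩ _ ⟨w, t, rfl, hw, -⟩ h
  rw [append_singleton_eq_of_prefix (mem_OutSet.1 ht₁).1 hw (List.cons_prefix_cons.mp h).2]

lemma exists_pos_of_mem_USet {u : α} (hu : u ∈ USet P K) :
    ∃ w t, (∀ c ∈ w, c ∈ K) ∧ t ∈ OutSet P K ∧ 0 < P (u :: (w ++ [t])) := by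
  by_contra! h
  refine (mem_USet.1 hu).2.ne' (ENNReal.tsum_eq_zero.2 ?_)
  rintro ⟨_, ⟨w, t, rfl, hw, ht⟩, -⟩
  exact nonpos_iff_eq_zero.1 (h w t hw ht)

lemma reach_eq_zero_of_notMem_USet {r t : α} (hr : r ∈ K) (hrU : r ∉ USet P K)
    (ht : t ∈ OutSet P K) : reach P K r t = 0 :=
  ENNReal.tsum_eq_zero.2 fun w => by_contra fun h =>
    hrU (mem_USet_of_pos hr w.2 ht (pos_iff_ne_zero.2 h))

lemma eq_zero_of_notMem_U1Set {u t : α} (hu : u ∈ K) (huU : u ∉ U1Set P K)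
    (ht : t ∈ OutSet P K) : P [u, t] = 0 := by
  rw [mem_U1Set, not_and, not_lt, nonpos_iff_eq_zero, Finset.sum_eq_zero_iff] at huU
  exact huU hu t ht

end Escape

section TransMatrix

variable [Fintype α]

-- `P₂(S)` in the paper's notation.
def transMatrix (P : List α → ℝ≥0∞) (S : Finset α) : Matrix S S ℝ :=
  Matrix.of fun u v => (P [u.1, v.1]).toReal

lemma sum_transMatrix (hP : IsTPF P) (S : Finset α) (u : S) :
    ∑ v, transMatrix P S u v = (∑ v ∈ S, P [u.1, v]).toReal := by
  rw [ENNReal.toReal_sum fun v _ => hP.ne_top _]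
  exact Finset.sum_coe_sort S fun v => (P [u.1, v]).toReal

lemma sum_transMatrix_le_one (hP : IsTPF P) (S : Finset α) (u : S) :
    ∑ v, transMatrix P S u v ≤ 1 := by
  rw [sum_transMatrix hP]
  exact ENNReal.toReal_le_of_le_ofReal zero_le_one (by simpa using hP.sum_le_one u.1 S)

lemma sum_transMatrix_lt_one (hP : IsTPF P) {S : Finset α} (u : S) {t : α}
    (ht : t ∉ S) (hpos : 0 < P [u.1, t]) : ∑ v, transMatrix P S u v < 1 := by
  classical
  have hlt : ∑ v ∈ S, P [u.1, v] < 1 := calc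
    _ < ∑ v ∈ S, P [u.1, v] + P [u.1, t] :=
      ENNReal.lt_add_right (ENNReal.sum_ne_top.2 fun v _ => hP.ne_top _) hpos.ne'
    _ = ∑ v ∈ insert t S, P [u.1, v] := by rw [Finset.sum_insert ht, add_comm]
    _ ≤ 1 := hP.sum_le_one u.1 _
  rw [sum_transMatrix hP]
  simpa using
    (ENNReal.toReal_lt_toReal (hlt.trans ENNReal.one_lt_top).ne ENNReal.one_ne_top).2 hlt

lemma exists_path_to_leak (hP : IsTPF P) {u : α} (hu : u ∈ USet P K) :
    ∃ l, Relation.ReflTransGen (fun i j => 0 < transMatrix P (USet P K) i j) ⟨u, hu⟩ l ∧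
      ∑ j, transMatrix P (USet P K) l j < 1 := by
  obtain ⟨w, t, hw, ht, hpos⟩ := exists_pos_of_mem_USet hu
  induction w generalizing u with
  | nil =>
    have htU : t ∉ USet P K := fun h => (mem_OutSet.1 ht).1 (mem_USet.1 h).1
    exact ⟨_, .refl, sum_transMatrix_lt_one hP ⟨u, hu⟩ htU hpos⟩
  | cons c w ih =>
    rw [List.cons_append, hP.cons] at hpos
    obtain ⟨huc, hc⟩ := ENNReal.mul_pos_iff.1 hpos
    have hw' : ∀ d ∈ w, d ∈ K := fun d hd => hw d (.tail _ hd)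
    obtain ⟨l, hpath, hl⟩ := ih (mem_USet_of_pos (hw c List.mem_cons_self) hw' ht hc) hw' hc
    exact ⟨l, .head (ENNReal.toReal_pos huc.ne' (hP.ne_top _)) hpath, hl⟩

variable [DecidableEq α]

lemma one_sub_transMatrix_mulVec_reach (hP : IsTPF P) {t : α} (ht : t ∈ OutSet P K) :
    (1 - transMatrix P (USet P K)) *ᵥ (fun u : USet P K => (reach P K u t).toReal)
      = fun u => (P [u.1, t]).toReal := by
  have htK := (mem_OutSet.1 ht).1
  ext u
  have hrec : reach P K u t = P [u, t] + ∑ c ∈ USet P K, P [u, c] * reach P K c t := by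
    rw [reach_eq hP, Finset.sum_subset (fun c hc => (mem_USet.1 hc).1)]
    intro c hc hcU
    rw [reach_eq_zero_of_notMem_USet hc hcU ht, mul_zero]
  rw [Matrix.sub_mulVec, Matrix.one_mulVec, Pi.sub_apply, sub_eq_iff_eq_add, hrec,
    ENNReal.toReal_add (hP.ne_top _) (ENNReal.sum_ne_top.2 fun c _ =>
      ENNReal.mul_ne_top (hP.ne_top _) (reach_ne_top hP htK c)),
    ENNReal.toReal_sum fun c _ => ENNReal.mul_ne_top (hP.ne_top _) (reach_ne_top hP htK c),
    ← Finset.sum_coe_sort]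
  simp [Matrix.mulVec, dotProduct, transMatrix]

lemma inclusionMatrix_mulVec {t : α} (ht : t ∈ OutSet P K) :
    (Matrix.of fun (u : USet P K) (v : U1Set P K) => if (u : α) = v then (1 : ℝ) else 0) *ᵥ
      (fun r => (P [r.1, t]).toReal) = fun u => (P [u.1, t]).toReal := by
  ext u
  simp only [Matrix.mulVec, dotProduct, Matrix.of_apply, ite_mul, one_mul, zero_mul]
  rw [Finset.sum_coe_sort (U1Set P K) fun v => if u.1 = v then (P [v, t]).toReal else 0,
    Finset.sum_ite_eq]
  split_ifs with hu
  · rfl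
  · rw [eq_zero_of_notMem_U1Set (mem_USet.1 u.2).1 hu ht, ENNReal.toReal_zero]

end TransMatrix

end PA

open scoped ENNReal in
theorem abstr_eq_linear_solution_general {α : Type*} [Fintype α] [DecidableEq α]
    (P : List α → ℝ≥0∞) (hP : PA.IsTPF P) (a : α)
    (S₁ : Finset α)
    (s t : α) (hsI : s ∈ S₁ ∧ s ∉ PA.interior P a S₁) (hsU : s ∈ PA.USet P S₁)
    (ht : t ∈ PA.OutSet P S₁)
    (Q : Matrix {x // x ∈ PA.USet P S₁} {x // x ∈ PA.U1Set P S₁} ℝ)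
    (hQ : (1 - Matrix.of fun u v : {x // x ∈ PA.USet P S₁} => (P [u.1, v.1]).toReal) * Q
        = Matrix.of fun (u : {x // x ∈ PA.USet P S₁}) (v : {x // x ∈ PA.U1Set P S₁}) =>
            if (u : α) = (v : α) then (1 : ℝ) else 0) :
    PA.abstr P a S₁ [s, t]
        = PA.setP P {x | ∃ w : List α, x = s :: (w ++ [t]) ∧ ∀ c ∈ w, c ∈ S₁} ∧
    (PA.abstr P a S₁ [s, t]).toReal
        = ∑ r : {x // x ∈ PA.U1Set P S₁}, Q ⟨s, hsU⟩ r * (P [r.1, t]).toReal := by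
  have htS : t ∉ S₁ := (PA.mem_OutSet.1 ht).1
  have hpath : PA.abstr P a S₁ [s, t]
      = PA.setP P {x | ∃ w : List α, x = s :: (w ++ [t]) ∧ ∀ c ∈ w, c ∈ S₁} := by
    rw [PA.abstr_pair hsI.2 htS, PA.preim_pair hsI.1 htS]
  refine ⟨hpath, ?_⟩
  have hsolve : (fun u : PA.USet P S₁ => (PA.reach P S₁ u t).toReal)
      = Q.mulVec fun r => (P [r.1, t]).toReal := by
    refine Matrix.injective_one_sub_mulVec (A := PA.transMatrix P (PA.USet P S₁))
      (fun _ _ => ENNReal.toReal_nonneg) (PA.sum_transMatrix_le_one hP _)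
      (fun u => PA.exists_path_to_leak hP u.2) ?_
    dsimp only
    rw [PA.one_sub_transMatrix_mulVec_reach hP ht, Matrix.mulVec_mulVec, PA.transMatrix, hQ,
      PA.inclusionMatrix_mulVec ht]
  rw [hpath, PA.setP_eq_reach htS]
  exact congrFun hsolve ⟨s, hsU⟩

open scoped ENNReal in
/-- the abstracted probability `P_{S₁}^a(st) = P(sS₁*t)` is obtained by
solving the linear system `(1 − P₂(𝒰))·Q = 1(𝒰,𝒰₁)`. -/
theorem abstr_eq_linear_solution {α : Type*} [Fintype α] [DecidableEq α]
    (P : List α → ℝ≥0∞) (hP : PA.IsTPF P) (a : α)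
    (S₁ : Finset α) (hS₁ : S₁ ⊂ Finset.univ)
    (s t : α) (hsI : s ∈ S₁ ∧ s ∉ PA.interior P a S₁) (hsU : s ∈ PA.USet P S₁)
    (ht : t ∈ PA.OutSet P S₁)
    (Q : Matrix {x // x ∈ PA.USet P S₁} {x // x ∈ PA.U1Set P S₁} ℝ)
    (hQ : (1 - Matrix.of fun u v : {x // x ∈ PA.USet P S₁} => (P [u.1, v.1]).toReal) * Q
        = Matrix.of fun (u : {x // x ∈ PA.USet P S₁}) (v : {x // x ∈ PA.U1Set P S₁}) =>
            if (u : α) = (v : α) then (1 : ℝ) else 0) :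
    PA.abstr P a S₁ [s, t]
        = PA.setP P {x | ∃ w : List α, x = s :: (w ++ [t]) ∧ ∀ c ∈ w, c ∈ S₁} ∧
    (PA.abstr P a S₁ [s, t]).toReal
        = ∑ r : {x // x ∈ PA.U1Set P S₁}, Q ⟨s, hsU⟩ r * (P [r.1, t]).toReal :=
  abstr_eq_linear_solution_general P hP a S₁ s t hsI hsU ht Q hQ
end
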